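/- Let S be the monoid presented by generators a_0, a_1, a_2, … subject to the relations a_i a_j = a_{j+1} a_i for all i ≤ j. Then S is left cancellative: for all s, u, v ∈ S, su = sv implies u = v. -/

import Mathlib

/-- The defining relations of Kruml's monoid: `aᵢ aⱼ = a_{j+1} aᵢ` for all `i ≤ j`,
as a relation on the free monoid on `ℕ`. -/
inductive KrumlRel : FreeMonoid ℕ → FreeMonoid ℕ → Prop
  | rel (i j : ℕ) : i ≤ j →
      KrumlRel (FreeMonoid.of i * FreeMonoid.of j) (FreeMonoid.of (j + 1) * FreeMonoid.of i)

/-- Kruml's monoid `S = ⟨a₀, a₁, a₂, … ∣ aᵢaⱼ = a_{j+1}aᵢ for i ≤ j⟩`: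
the quotient of the free monoid on `ℕ` by the congruence generated by the relations. -/
abbrev KrumlMonoid : Type := (conGen KrumlRel).Quotient

/-!
`S` acts on lists of naturals, `aᵢ` by inserting `i` after incrementing the leading entries
`≥ i`. The defining relations hold for this action, and each `aᵢ` acts injectively. Moreover the
relations rewrite any element `s` into the word read off from `s • []`, so `s ↦ s • []` is
injective; then `s * u = s * v` gives `s • (u • []) = s • (v • [])`, hence `u • [] = v • []`
and `u = v`.
-/

namespace KrumlMonoid

def insertShift (i : ℕ) : List ℕ → List ℕ
  | [] => [i]
  | j :: l => if i ≤ j then (j + 1) :: insertShift i l else i :: j :: l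

def eraseShift (i : ℕ) : List ℕ → List ℕ
  | [] => []
  | j :: l => if i < j then (j - 1) :: eraseShift i l else l

theorem eraseShift_insertShift (i : ℕ) : ∀ l : List ℕ, eraseShift i (insertShift i l) = l
  | [] => by simp [insertShift, eraseShift]
  | j :: l => by
    by_cases h : i ≤ j
    · simp [insertShift, eraseShift, h, Nat.lt_succ_of_le h, eraseShift_insertShift i l]
    · simp [insertShift, eraseShift, h]

theorem insertShift_injective (i : ℕ) : Function.Injective (insertShift i) :=
  Function.LeftInverse.injective (eraseShift_insertShift i)

theorem insertShift_insertShift {i j : ℕ} (h : i ≤ j) : ∀ l : List ℕ,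
    insertShift i (insertShift j l) = insertShift (j + 1) (insertShift i l)
  | [] => by simp [insertShift, h, show ¬ j + 1 ≤ i by omega]
  | k :: l => by
    by_cases hjk : j ≤ k
    · simp [insertShift, hjk, h.trans hjk, show i ≤ k + 1 by omega,
        insertShift_insertShift h l]
    · by_cases hik : i ≤ k
      · simp [insertShift, hjk, hik, h]
      · simp [insertShift, hjk, hik, h, show ¬ j + 1 ≤ i by omega]

def freeAction : FreeMonoid ℕ →* Function.End (List ℕ) :=
  FreeMonoid.lift insertShift

theorem conGen_le_ker_freeAction : conGen KrumlRel ≤ Con.ker freeAction :=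
  Con.conGen_le.mpr fun _ _ ⟨_, _, h⟩ => funext (insertShift_insertShift h)

def action : KrumlMonoid →* Function.End (List ℕ) :=
  (conGen KrumlRel).lift freeAction conGen_le_ker_freeAction

theorem action_injective (s : KrumlMonoid) : Function.Injective (action s) := by
  induction s using Con.induction_on with
  | H w =>
    induction w using FreeMonoid.inductionOn' with
    | one => exact Function.injective_id
    | of_mul i w ih =>
      rw [Con.coe_mul, map_mul]
      exact (insertShift_injective i).comp ih

def gen (i : ℕ) : KrumlMonoid := (FreeMonoid.of i : FreeMonoid ℕ)

theorem gen_mul_gen {i j : ℕ} (h : i ≤ j) : gen i * gen j = gen (j + 1) * gen i :=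
  (Con.eq _).mpr (ConGen.Rel.of _ _ (KrumlRel.rel i j h))

theorem gen_mul_ofList (i : ℕ) : ∀ l : List ℕ,
    gen i * (FreeMonoid.ofList l : FreeMonoid ℕ)
      = (FreeMonoid.ofList (insertShift i l) : FreeMonoid ℕ)
  | [] => rfl
  | j :: l => by
    rw [insertShift]
    split_ifs with h
    · rw [FreeMonoid.ofList_cons, FreeMonoid.ofList_cons, Con.coe_mul, Con.coe_mul]
      change gen i * (gen j * _) = gen (j + 1) * _
      rw [← mul_assoc, gen_mul_gen h, mul_assoc, gen_mul_ofList i l]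
    · rfl

theorem mul_ofList (s : KrumlMonoid) (l : List ℕ) :
    s * (FreeMonoid.ofList l : FreeMonoid ℕ)
      = (FreeMonoid.ofList (action s l) : FreeMonoid ℕ) := by
  induction s using Con.induction_on generalizing l with
  | H w =>
    induction w using FreeMonoid.inductionOn' generalizing l with
    | one => exact one_mul _
    | of_mul i w ih =>
      rw [Con.coe_mul, mul_assoc, ih, map_mul]
      exact gen_mul_ofList i _

theorem eq_ofList_action_nil (s : KrumlMonoid) :
    s = (FreeMonoid.ofList (action s []) : FreeMonoid ℕ) := by
  rw [← mul_ofList]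
  exact (mul_one s).symm

end KrumlMonoid

/-- `S` is left cancellative. -/
theorem krumlMonoid_left_cancellative :
    ∀ s u v : KrumlMonoid, s * u = s * v → u = v := by
  intro s u v h
  have hnil : KrumlMonoid.action u [] = KrumlMonoid.action v [] := by
    have hs := congr(KrumlMonoid.action $h [])
    rw [map_mul, map_mul] at hs
    exact KrumlMonoid.action_injective s hs
  rw [KrumlMonoid.eq_ofList_action_nil u, KrumlMonoid.eq_ofList_action_nil v, hnil]
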